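/- Let J₁, J₂, J₃ be nonzero reals, and define u₄ := (J₂J₃/J₁² − J₂/J₃ − J₃/J₂)/2, v₄ := (J₁J₃/J₂² − J₁/J₃ − J₃/J₁)/2, w₄ := (J₁J₂/J₃² − J₁/J₂ − J₂/J₁)/2. Then Q(u₄, v₄, w₄) = 0, and J₁u₄ + J₂v₄ + J₃w₄ = J₁ + J₂ + J₃ − (J₁J₂ + J₂J₃ + J₃J₁)²/(2J₁J₂J₃). -/
import Mathlib


/-- the point `(u₄, v₄, w₄)` lies on the boundary surface `Q = 0` of the
Gram set, and its energy equals `J₁+J₂+J₃ − (J₁J₂+J₂J₃+J₃J₁)²/(2J₁J₂J₃)`. -/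
theorem coplanar_extremum (J₁ J₂ J₃ : ℝ) (h₁ : J₁ ≠ 0) (h₂ : J₂ ≠ 0) (h₃ : J₃ ≠ 0)
    (u₄ v₄ w₄ : ℝ)
    (hu : u₄ = (J₂ * J₃ / J₁ ^ 2 - J₂ / J₃ - J₃ / J₂) / 2)
    (hv : v₄ = (J₁ * J₃ / J₂ ^ 2 - J₁ / J₃ - J₃ / J₁) / 2)
    (hw : w₄ = (J₁ * J₂ / J₃ ^ 2 - J₁ / J₂ - J₂ / J₁) / 2) :
    1 - u₄ ^ 2 - v₄ ^ 2 - w₄ ^ 2 + 2 * u₄ * v₄ * w₄ = 0 ∧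
    J₁ * u₄ + J₂ * v₄ + J₃ * w₄
      = J₁ + J₂ + J₃ - (J₁ * J₂ + J₂ * J₃ + J₃ * J₁) ^ 2 / (2 * (J₁ * J₂ * J₃)) := by
  subst hu hv hw
  constructor
  · field_simp
    ring
  · field_simp
    ring
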